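/- Suppose μ ∈ λ + 𝒳_r and ⟨μ + ρ, α^∨⟩ ∈ ℤ_{<0} for some α ∈ Φ_I^+. Then s_α · μ ∈ λ + 𝒳_r. -/
import Mathlib


open Finset

inductive RSType where
  | B
  | C
  | D
deriving DecidableEq

noncomputable def eps (n : ℕ) (i : Fin n) : Fin n → ℝ := fun j => if j = i then 1 else 0

noncomputable def simpleRoot (n : ℕ) (t : RSType) (i : Fin n) : Fin n → ℝ :=
  if (i : ℕ) + 1 < n then
    eps n i - (fun j : Fin n => if (j : ℕ) = (i : ℕ) + 1 then 1 else 0)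
  else
    match t with
    | RSType.B => eps n i
    | RSType.C => (2 : ℝ) • eps n i
    | RSType.D => (fun j : Fin n => if (j : ℕ) + 1 = (i : ℕ) then 1 else 0) + eps n i

noncomputable def inn (n : ℕ) (x y : Fin n → ℝ) : ℝ := ∑ i, x i * y i

noncomputable def pairing (n : ℕ) (x y : Fin n → ℝ) : ℝ := 2 * inn n x y / inn n y y

/-- Membership in `Λ^{𝔭_I}` where `I = Π \ {α_{p 1}, …, α_{p k}}`:
`⟨μ, α^∨⟩ ∈ ℕ` for all simple roots `α ∈ I`. -/
def inLam (n : ℕ) (t : RSType) (p : ℕ → ℕ) (k : ℕ) (μ : Fin n → ℝ) : Prop :=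
  ∀ i : Fin n, (∀ j, 1 ≤ j → j ≤ k → (i : ℕ) + 1 ≠ p j) →
    ∃ m : ℕ, pairing n μ (simpleRoot n t i) = (m : ℝ)

/-- `ρ`, the half sum of the positive roots. -/
noncomputable def rho (n : ℕ) (t : RSType) : Fin n → ℝ :=
  (1 / 2 : ℝ) •
    ((∑ q ∈ Finset.univ.filter (fun q : Fin n × Fin n => q.1 < q.2),
        ((eps n q.1 - eps n q.2) + (eps n q.1 + eps n q.2))) +
      match t with
      | RSType.B => ∑ i, eps n i
      | RSType.C => ∑ i, (2 : ℝ) • eps n i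
      | RSType.D => 0)

/-- `β ∈ Φ^+`. -/
def isPosRoot (n : ℕ) (t : RSType) (β : Fin n → ℝ) : Prop :=
  (∃ i j : Fin n, i < j ∧ (β = eps n i - eps n j ∨ β = eps n i + eps n j)) ∨
  (t = RSType.B ∧ ∃ i, β = eps n i) ∨
  (t = RSType.C ∧ ∃ i, β = (2 : ℝ) • eps n i)

/-- The simple roots lying in `I = Π \ {α_{p 1}, …, α_{p k}}`. -/
def Iroots (n : ℕ) (t : RSType) (p : ℕ → ℕ) (k : ℕ) : Set (Fin n → ℝ) :=
  {x | ∃ i : Fin n, (∀ j, 1 ≤ j → j ≤ k → (i : ℕ) + 1 ≠ p j) ∧ x = simpleRoot n t i}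

/-- `β ∈ Φ_I = Φ ∩ ℤI`. -/
def inPhiI (n : ℕ) (t : RSType) (p : ℕ → ℕ) (k : ℕ) (β : Fin n → ℝ) : Prop :=
  (isPosRoot n t β ∨ isPosRoot n t (-β)) ∧
    β ∈ Submodule.span ℤ (Iroots n t p k)

/-- The reflection `s_β(x) = x - ⟨x, β^∨⟩ β`. -/
noncomputable def sRefl (n : ℕ) (β : Fin n → ℝ) : (Fin n → ℝ) → (Fin n → ℝ) :=
  fun x => x - pairing n x β • β

/-- `𝒳_r = {a ∈ ℤ^n : Σ |a_i| ≤ r}`. -/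
def Xr (n : ℕ) (r : ℤ) : Set (Fin n → ℤ) := {a | ∑ i, |a i| ≤ r}

/-- `μ ∈ λ + 𝒳_r`. -/
def inLamX (n : ℕ) (lam : Fin n → ℝ) (r : ℕ) (μ : Fin n → ℝ) : Prop :=
  ∃ a : Fin n → ℤ, a ∈ Xr n (r : ℤ) ∧ μ = lam + fun i => (a i : ℝ)
-- helper lemmas batch 1
section helpers
variable {n : ℕ}

lemma inn_eps_right (x : Fin n → ℝ) (i : Fin n) : inn n x (eps n i) = x i := by
  simp [inn, eps, mul_ite, Finset.sum_ite_eq']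

lemma inn_sub_right (x y z : Fin n → ℝ) : inn n x (y - z) = inn n x y - inn n x z := by
  simp [inn, mul_sub, Finset.sum_sub_distrib]

lemma inn_add_right (x y z : Fin n → ℝ) : inn n x (y + z) = inn n x y + inn n x z := by
  simp [inn, mul_add, Finset.sum_add_distrib]

lemma inn_smul_right (x y : Fin n → ℝ) (c : ℝ) : inn n x (c • y) = c * inn n x y := by
  simp only [inn, Pi.smul_apply, smul_eq_mul, Finset.mul_sum]
  exact Finset.sum_congr rfl (fun i _ => by ring)

lemma inn_pm (x : Fin n → ℝ) (i j : Fin n) :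
    inn n x (eps n i - eps n j) = x i - x j := by
  rw [inn_sub_right, inn_eps_right, inn_eps_right]

lemma inn_pp (x : Fin n → ℝ) (i j : Fin n) :
    inn n x (eps n i + eps n j) = x i + x j := by
  rw [inn_add_right, inn_eps_right, inn_eps_right]

lemma eps_apply (i j : Fin n) : eps n i j = if j = i then 1 else 0 := rfl

lemma pairing_pm (x : Fin n → ℝ) {i j : Fin n} (hij : i ≠ j) :
    pairing n x (eps n i - eps n j) = x i - x j := by
  have h2 : inn n (eps n i - eps n j) (eps n i - eps n j) = 2 := by
    rw [inn_pm]
    simp [eps_apply, hij, hij.symm, Pi.sub_apply]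
    norm_num
  rw [pairing, h2, inn_pm]; ring

lemma pairing_pp (x : Fin n → ℝ) {i j : Fin n} (hij : i ≠ j) :
    pairing n x (eps n i + eps n j) = x i + x j := by
  have h2 : inn n (eps n i + eps n j) (eps n i + eps n j) = 2 := by
    rw [inn_pp]
    simp [eps_apply, hij, hij.symm, Pi.add_apply]
    norm_num
  rw [pairing, h2, inn_pp]; ring

lemma pairing_B (x : Fin n → ℝ) (i : Fin n) :
    pairing n x (eps n i) = 2 * x i := by
  have h2 : inn n (eps n i) (eps n i) = 1 := by
    rw [inn_eps_right]; simp [eps_apply]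
  rw [pairing, h2, inn_eps_right]; ring

lemma pairing_C (x : Fin n → ℝ) (i : Fin n) :
    pairing n x ((2:ℝ) • eps n i) = x i := by
  have h2 : inn n ((2:ℝ) • eps n i) ((2:ℝ) • eps n i) = 4 := by
    rw [inn_smul_right]
    simp [inn, eps, mul_ite, Finset.sum_ite_eq']
    norm_num
  rw [pairing, h2, inn_smul_right, inn_eps_right]; ring

lemma simpleRoot_lt (t : RSType) (i : Fin n) (h : (i:ℕ) + 1 < n) :
    simpleRoot n t i = eps n i - eps n ⟨(i:ℕ)+1, h⟩ := by
  rw [simpleRoot.eq_def, if_pos h]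
  congr 1
  funext j
  simp [eps, Fin.ext_iff]

lemma simpleRoot_B (i : Fin n) (h : ¬ ((i:ℕ) + 1 < n)) :
    simpleRoot n RSType.B i = eps n i := by
  rw [simpleRoot.eq_def, if_neg h]

lemma simpleRoot_C (i : Fin n) (h : ¬ ((i:ℕ) + 1 < n)) :
    simpleRoot n RSType.C i = (2:ℝ) • eps n i := by
  rw [simpleRoot.eq_def, if_neg h]

lemma simpleRoot_D (hn : 2 ≤ n) (i : Fin n) (h : ¬ ((i:ℕ) + 1 < n)) :
    simpleRoot n RSType.D i = eps n ⟨n-2, by omega⟩ + eps n i := by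
  have hi : (i:ℕ) = n - 1 := by have := i.isLt; omega
  rw [simpleRoot.eq_def, if_neg h]
  funext j
  have hj := j.isLt
  have e : ((j:ℕ) + 1 = n - 1) = ((j:ℕ) = n - 2) := by
    apply propext; constructor <;> (intro; omega)
  simp only [Pi.add_apply, eps, Fin.ext_iff, hi, e]

end helpers
noncomputable def phiL (n : ℕ) (P : ℕ) : (Fin n → ℝ) →ₗ[ℤ] ℝ where
  toFun x := ∑ m ∈ Finset.univ.filter (fun m : Fin n => (m : ℕ) < P), x m
  map_add' x y := by simp [Finset.sum_add_distrib]
  map_smul' c x := by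
    simp only [Pi.smul_apply, zsmul_eq_mul, RingHom.id_apply, Finset.mul_sum]

lemma phiL_eps (n P : ℕ) (i : Fin n) :
    phiL n P (eps n i) = if (i:ℕ) < P then 1 else 0 := by
  simp [phiL, eps, Finset.sum_ite_eq', Finset.mem_filter]

section helpers2
variable {n : ℕ}

lemma sum_abs_two {i j : Fin n} (hij : i ≠ j) (a a' : Fin n → ℤ)
    (hoff : ∀ m, m ≠ i → m ≠ j → a' m = a m)
    (hsum : |a' i| + |a' j| ≤ |a i| + |a j|) :
    ∑ m, |a' m| ≤ ∑ m, |a m| := by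
  have key : ∀ b : Fin n → ℤ,
      ∑ m, |b m| = (∑ m ∈ Finset.univ \ {i, j}, |b m|) + (|b i| + |b j|) := by
    intro b
    rw [← Finset.sum_sdiff (Finset.subset_univ {i, j}), Finset.sum_pair hij]
  rw [key a, key a']
  have he : ∑ m ∈ Finset.univ \ {i, j}, |a' m| = ∑ m ∈ Finset.univ \ {i, j}, |a m| := by
    refine Finset.sum_congr rfl (fun m hm => ?_)
    simp only [Finset.mem_sdiff, Finset.mem_insert, Finset.mem_singleton] at hm
    rw [hoff m (fun h => hm.2 (Or.inl h)) (fun h => hm.2 (Or.inr h))]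
  omega

lemma sum_abs_one (i : Fin n) (a a' : Fin n → ℤ)
    (hoff : ∀ m, m ≠ i → a' m = a m)
    (hsum : |a' i| ≤ |a i|) :
    ∑ m, |a' m| ≤ ∑ m, |a m| := by
  have key : ∀ b : Fin n → ℤ,
      ∑ m, |b m| = (∑ m ∈ Finset.univ.erase i, |b m|) + |b i| := by
    intro b
    rw [Finset.sum_erase_add]
    exact Finset.mem_univ i
  rw [key a, key a']
  have he : ∑ m ∈ Finset.univ.erase i, |a' m| = ∑ m ∈ Finset.univ.erase i, |a m| := by
    refine Finset.sum_congr rfl (fun m hm => ?_)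
    rw [hoff m (Finset.ne_of_mem_erase hm)]
  omega

lemma chainAux (v : Fin n → ℝ) (good : ℕ → Prop)
    (hstep : ∀ m : ℕ, (h : m + 1 < n) → good m →
      v ⟨m, by omega⟩ - v ⟨m + 1, h⟩ = 1) :
    ∀ i j : ℕ, (hij : i ≤ j) → (hj : j < n) → (∀ m, i ≤ m → m < j → good m) →
      v ⟨i, by omega⟩ - v ⟨j, hj⟩ = ((j : ℝ) - i) := by
  intro i j hij
  induction j, hij using Nat.le_induction with
  | base => intro hj _; simp
  | succ j hij ih =>
    intro hj hgood
    have hjn : j < n := by omega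
    have h1 := ih hjn (fun m hm hm2 => hgood m hm (by omega))
    have h2 := hstep j hj (hgood j hij (by omega))
    push_cast
    push_cast at h1
    linarith

end helpers2
lemma pmono_aux (k : ℕ) (p : ℕ → ℕ) (hmono : ∀ j, j < k → p j < p (j + 1)) :
    ∀ a b : ℕ, a ≤ b → b ≤ k → p a ≤ p b := by
  intro a b hab
  induction b, hab using Nat.le_induction with
  | base => intro; exact le_rfl
  | succ b hab ih =>
    intro hbk
    exact le_trans (ih (by omega)) (le_of_lt (hmono b (by omega)))

lemma phi_vanish (n k : ℕ) (hn : 2 ≤ n) (t : RSType) (p : ℕ → ℕ)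
    (hmono : ∀ j, j < k → p j < p (j + 1)) (hpk : p k ≤ n)
    (hpkD : t = RSType.D → p k ≠ n - 1)
    (α : Fin n → ℝ) (hαI : α ∈ Submodule.span ℤ (Iroots n t p k))
    (j : ℕ) (hj1 : 1 ≤ j) (hjk : j ≤ k) :
    phiL n (p j) α = 0 := by
  have pmono := pmono_aux k p hmono
  have hpjn : p j ≤ n := le_trans (pmono j k hjk le_rfl) hpk
  suffices h : Submodule.span ℤ (Iroots n t p k) ≤ LinearMap.ker (phiL n (p j)) by
    exact LinearMap.mem_ker.mp (h hαI)
  rw [Submodule.span_le]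
  rintro x ⟨i, hi, rfl⟩
  simp only [SetLike.mem_coe, LinearMap.mem_ker]
  by_cases hlt : (i:ℕ) + 1 < n
  · rw [simpleRoot_lt t i hlt, map_sub, phiL_eps, phiL_eps]
    have hne := hi j hj1 hjk
    have : ((i:ℕ) < p j) ↔ (((⟨(i:ℕ)+1, hlt⟩ : Fin n) : ℕ) < p j) := by
      simp only [Fin.val_mk]
      omega
    rw [if_congr this rfl rfl, sub_self]
  · have hi2 : (i:ℕ) = n - 1 := by have := i.isLt; omega
    have hBn : ¬ ((i:ℕ) < p j) := by
      intro hc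
      exact hi j hj1 hjk (by omega)
    cases t with
    | B => rw [simpleRoot_B i hlt, phiL_eps, if_neg hBn]
    | C =>
      rw [simpleRoot_C i hlt, two_smul, map_add, phiL_eps, if_neg hBn, add_zero]
    | D =>
      have hA : ¬ (n - 2 < p j) := by
        intro hc
        have h1 : p j = n - 1 ∨ p j = n := by omega
        rcases h1 with h1 | h1
        · rcases Nat.lt_or_ge j k with hjlt | hjge
          · have : p j < p k := lt_of_lt_of_le (hmono j hjlt) (pmono (j+1) k (by omega) le_rfl)
            have hpkn : p k = n := by omega
            exact hi k (by omega) le_rfl (by omega)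
          · have hjk2 : j = k := by omega
            rw [hjk2] at h1
            exact hpkD rfl h1
        · exact hi j hj1 hjk (by omega)
      rw [simpleRoot_D hn i hlt, map_add, phiL_eps, phiL_eps]
      rw [if_neg (by simpa using hA), if_neg hBn, add_zero]
lemma finishX (n : ℕ) (r : ℕ) (lam μ ρv α : Fin n → ℝ) (a a' : Fin n → ℤ)
    (ha : ∑ i, |a i| ≤ (r:ℤ)) (hμa : μ = lam + fun i => (a i : ℝ))
    (m : ℤ) (hmp : pairing n (μ + ρv) α = (m:ℝ))
    (hsum : ∑ i, |a' i| ≤ ∑ i, |a i|)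
    (hvec : ∀ x, (a' x : ℝ) = a x - m * α x) :
    inLamX n lam r (sRefl n α (μ + ρv) - ρv) := by
  refine ⟨a', le_trans hsum ha, ?_⟩
  funext x
  simp only [sRefl, Pi.sub_apply, Pi.smul_apply, smul_eq_mul, hmp]
  simp only [hμa, Pi.add_apply, hvec]
  ring

set_option maxHeartbeats 1000000 in
/-- Lemma 6.7: if `μ ∈ λ + 𝒳_r` and `⟨μ+ρ, α^∨⟩ ∈ ℤ_{<0}` for some `α ∈ Φ_I^+`,
then `s_α · μ ∈ λ + 𝒳_r`. -/
theorem stmt6 (n k : ℕ) (hn : 2 ≤ n) (t : RSType)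
    (p : ℕ → ℕ) (hp0 : p 0 = 0)
    (hmono : ∀ j, j < k → p j < p (j + 1))
    (hpk : p k ≤ n) (hpk1 : p (k + 1) = n)
    (hpkD : t = RSType.D → p k ≠ n - 1)
    (lam : Fin n → ℝ) (hlam : inLam n t p k lam)
    (hlam1 : ∀ β : Fin n → ℝ, isPosRoot n t β → ¬ inPhiI n t p k β →
      ¬ ∃ m : ℤ, 0 < m ∧ pairing n (lam + rho n t) β = (m : ℝ))
    (hlam2 : ∀ i : Fin n, (∀ j, 1 ≤ j → j ≤ k → (i : ℕ) + 1 ≠ p j) →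
      pairing n (lam + rho n t) (simpleRoot n t i) = 1)
    (r : ℕ) (α μ : Fin n → ℝ)
    (hα : isPosRoot n t α) (hαI : α ∈ Submodule.span ℤ (Iroots n t p k))
    (hpair : ∃ m : ℤ, m < 0 ∧ pairing n (μ + rho n t) α = (m : ℝ))
    (hμ : inLamX n lam r μ) :
    inLamX n lam r (sRefl n α (μ + rho n t) - rho n t) := by
  obtain ⟨a, ha, hμa⟩ := hμ
  obtain ⟨m, hm, hmpair⟩ := hpair
  have ha' : ∑ i, |a i| ≤ (r : ℤ) := ha
  set v := lam + rho n t with hv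
  have hμv : μ + rho n t = v + fun i => (a i : ℝ) := by
    rw [hμa, hv]; funext x; simp only [Pi.add_apply]; ring
  have hvan : ∀ j, 1 ≤ j → j ≤ k → phiL n (p j) α = 0 :=
    fun j h1 h2 => phi_vanish n k hn t p hmono hpk hpkD α hαI j h1 h2
  have hstep : ∀ mm : ℕ, (h : mm + 1 < n) → (∀ jj, 1 ≤ jj → jj ≤ k → mm + 1 ≠ p jj) →
      v ⟨mm, by omega⟩ - v ⟨mm + 1, h⟩ = 1 := by
    intro mm h hg
    have h2 := hlam2 ⟨mm, by omega⟩ (fun jj h1 h2 => hg jj h1 h2)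
    rw [simpleRoot_lt t ⟨mm, by omega⟩ h] at h2
    rw [pairing_pm] at h2
    · exact h2
    · intro hc
      have := congrArg Fin.val hc
      simp only [Fin.val_mk] at this
      omega
  have hchain : ∀ (i j : Fin n), (i:ℕ) ≤ (j:ℕ) →
      (∀ mm, (i:ℕ) ≤ mm → mm < (j:ℕ) → ∀ jj, 1 ≤ jj → jj ≤ k → mm + 1 ≠ p jj) →
      v i - v j = ((j:ℕ) : ℝ) - ((i:ℕ) : ℝ) := by
    intro i j h1 h2
    have := chainAux v (fun mm => ∀ jj, 1 ≤ jj → jj ≤ k → mm + 1 ≠ p jj) hstep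
      (i:ℕ) (j:ℕ) h1 j.isLt h2
    simpa [Fin.eta] using this
  rcases hα with ⟨i, j, hij, hform | hform⟩ | ⟨ht, i, hform⟩ | ⟨ht, i, hform⟩
  · -- α = eps i - eps j
    have hne : i ≠ j := ne_of_lt hij
    have hijn : (i:ℕ) < (j:ℕ) := hij
    have hgood : ∀ mm, (i:ℕ) ≤ mm → mm < (j:ℕ) → ∀ jj, 1 ≤ jj → jj ≤ k → mm + 1 ≠ p jj := by
      intro mm h1 h2 jj hj1 hjk hc
      have h0 := hvan jj hj1 hjk
      rw [hform, map_sub, phiL_eps, phiL_eps] at h0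
      rw [if_pos (by omega), if_neg (by omega)] at h0
      norm_num at h0
    have hb := hchain i j (le_of_lt hijn) hgood
    have hcast : ((i:ℕ):ℝ) ≤ ((j:ℕ):ℝ) := by exact_mod_cast le_of_lt hijn
    have hc := hmpair
    rw [hform, hμv, pairing_pm _ hne] at hc
    simp only [Pi.add_apply] at hc
    have hba : ((a i : ℝ)) - (a j : ℝ) ≤ (m:ℝ) := by linarith
    have hint : a i - a j ≤ m := by exact_mod_cast hba
    refine finishX n r lam μ (rho n t) α a
      (fun x => if x = i then a i - m else if x = j then a j + m else a x) ha' hμa m hmpair ?_ ?_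
    · have key : |a i - m| + |a j + m| ≤ |a i| + |a j| := by
        rcases abs_cases (a i - m) with ⟨e1, s1⟩ | ⟨e1, s1⟩ <;>
        rcases abs_cases (a j + m) with ⟨e2, s2⟩ | ⟨e2, s2⟩ <;>
        rcases abs_cases (a i) with ⟨e3, s3⟩ | ⟨e3, s3⟩ <;>
        rcases abs_cases (a j) with ⟨e4, s4⟩ | ⟨e4, s4⟩ <;>
        rw [e1, e2, e3, e4] <;> omega
      refine sum_abs_two hne a _ (fun mm h1 h2 => by simp [h1, h2]) ?_
      simpa [Ne.symm hne] using key
    · intro x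
      rw [hform]
      by_cases h1 : x = i
      · subst h1
        simp [eps, hne]
        try push_cast
        try ring
      · by_cases h2 : x = j
        · subst h2
          simp [eps, h1]
          try push_cast
          try ring
        · simp [eps, h1, h2]
  · -- α = eps i + eps j
    have hne : i ≠ j := ne_of_lt hij
    have hijn : (i:ℕ) < (j:ℕ) := hij
    have hjlt : (j:ℕ) < n := j.isLt
    have hPle : ∀ jj, 1 ≤ jj → jj ≤ k → p jj ≤ (i:ℕ) := by
      intro jj hj1 hjk
      by_contra hcon
      push_neg at hcon
      have h0 := hvan jj hj1 hjk
      rw [hform, map_add, phiL_eps, phiL_eps, if_pos hcon] at h0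
      split_ifs at h0 <;> norm_num at h0
    have hgood : ∀ mm, (i:ℕ) ≤ mm → ∀ jj, 1 ≤ jj → jj ≤ k → mm + 1 ≠ p jj := by
      intro mm h1 jj hj1 hjk hcon
      have := hPle jj hj1 hjk
      omega
    set q : Fin n := ⟨n - 1, by omega⟩ with hq
    have hqval : (q:ℕ) = n - 1 := rfl
    have hiq : (i:ℕ) ≤ (q:ℕ) := by rw [hqval]; omega
    have hjq : (j:ℕ) ≤ (q:ℕ) := by rw [hqval]; omega
    have hb1 := hchain i q hiq (fun mm h1 _ => hgood mm h1)
    have hb2 := hchain j q hjq (fun mm h1 _ => hgood mm (le_trans (le_of_lt hijn) h1))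
    have hqgood : ∀ jj, 1 ≤ jj → jj ≤ k → (q:ℕ) + 1 ≠ p jj := by
      intro jj h1 h2 hcon
      have := hPle jj h1 h2
      rw [hqval] at hcon
      omega
    have h2 := hlam2 q hqgood
    have hnotlt : ¬ ((q:ℕ) + 1 < n) := by rw [hqval]; omega
    have hvq : 0 ≤ v q := by
      cases t with
      | B => rw [simpleRoot_B q hnotlt, pairing_B] at h2; linarith
      | C => rw [simpleRoot_C q hnotlt, pairing_C] at h2; linarith
      | D =>
        rw [simpleRoot_D hn q hnotlt] at h2
        have hne2 : (⟨n - 2, by omega⟩ : Fin n) ≠ q := by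
          intro hcon
          have hcon2 := congrArg Fin.val hcon
          exact (by omega : ¬ (n - 2 = n - 1)) hcon2
        rw [pairing_pp _ hne2] at h2
        set q2 : Fin n := (⟨n - 2, by omega⟩ : Fin n) with hq2
        have hq2val : (q2:ℕ) = n - 2 := rfl
        have hb3 := hchain q2 q (by rw [hqval, hq2val]; omega)
          (fun mm h1 _ => hgood mm (by rw [hq2val] at h1; omega))
        have hcast3 : ((q:ℕ):ℝ) - ((q2:ℕ):ℝ) = 1 := by
          rw [hqval, hq2val, Nat.cast_sub (by omega), Nat.cast_sub (by omega)]
          push_cast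
          ring
        linarith
    have hc := hmpair
    rw [hform, hμv, pairing_pp _ hne] at hc
    simp only [Pi.add_apply] at hc
    have c1 : ((i:ℕ):ℝ) ≤ ((q:ℕ):ℝ) := by exact_mod_cast hiq
    have c2 : ((j:ℕ):ℝ) ≤ ((q:ℕ):ℝ) := by exact_mod_cast hjq
    have hba : ((a i : ℝ)) + (a j : ℝ) ≤ (m:ℝ) := by linarith
    have hint : a i + a j ≤ m := by exact_mod_cast hba
    refine finishX n r lam μ (rho n t) α a
      (fun x => if x = i then a i - m else if x = j then a j - m else a x) ha' hμa m hmpair ?_ ?_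
    · have key : |a i - m| + |a j - m| ≤ |a i| + |a j| := by
        rcases abs_cases (a i - m) with ⟨e1, s1⟩ | ⟨e1, s1⟩ <;>
        rcases abs_cases (a j - m) with ⟨e2, s2⟩ | ⟨e2, s2⟩ <;>
        rcases abs_cases (a i) with ⟨e3, s3⟩ | ⟨e3, s3⟩ <;>
        rcases abs_cases (a j) with ⟨e4, s4⟩ | ⟨e4, s4⟩ <;>
        rw [e1, e2, e3, e4] <;> omega
      refine sum_abs_two hne a _ (fun mm h1 h2 => by simp [h1, h2]) ?_
      simpa [Ne.symm hne] using key
    · intro x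
      rw [hform]
      by_cases h1 : x = i
      · subst h1
        simp [eps, hne]
        try push_cast
        try ring
      · by_cases h2 : x = j
        · subst h2
          simp [eps, h1]
          try push_cast
          try ring
        · simp [eps, h1, h2]
  · -- t = B, α = eps i
    subst ht
    have hPle : ∀ jj, 1 ≤ jj → jj ≤ k → p jj ≤ (i:ℕ) := by
      intro jj hj1 hjk
      by_contra hcon
      push_neg at hcon
      have h0 := hvan jj hj1 hjk
      rw [hform, phiL_eps, if_pos hcon] at h0
      norm_num at h0
    have hgood : ∀ mm, (i:ℕ) ≤ mm → ∀ jj, 1 ≤ jj → jj ≤ k → mm + 1 ≠ p jj := by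
      intro mm h1 jj hj1 hjk hcon
      have := hPle jj hj1 hjk
      omega
    set q : Fin n := ⟨n - 1, by omega⟩ with hq
    have hqval : (q:ℕ) = n - 1 := rfl
    have hiq : (i:ℕ) ≤ (q:ℕ) := by rw [hqval]; have := i.isLt; omega
    have hb1 := hchain i q hiq (fun mm h1 _ => hgood mm h1)
    have hqgood : ∀ jj, 1 ≤ jj → jj ≤ k → (q:ℕ) + 1 ≠ p jj := by
      intro jj h1 h2 hcon
      have := hPle jj h1 h2
      rw [hqval] at hcon
      have := i.isLt
      omega
    have h2 := hlam2 q hqgood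
    have hnotlt : ¬ ((q:ℕ) + 1 < n) := by rw [hqval]; omega
    rw [simpleRoot_B q hnotlt, pairing_B] at h2
    have hc := hmpair
    rw [hform, hμv, pairing_B] at hc
    simp only [Pi.add_apply] at hc
    have c1 : ((i:ℕ):ℝ) ≤ ((q:ℕ):ℝ) := by exact_mod_cast hiq
    have hba : 2 * (a i : ℝ) ≤ (m:ℝ) := by linarith
    have hint : 2 * a i ≤ m := by exact_mod_cast hba
    refine finishX n r lam μ (rho n RSType.B) α a
      (fun x => if x = i then a i - m else a x) ha' hμa m hmpair ?_ ?_
    · have key : |a i - m| ≤ |a i| := by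
        rcases abs_cases (a i - m) with ⟨e1, s1⟩ | ⟨e1, s1⟩ <;>
        rcases abs_cases (a i) with ⟨e3, s3⟩ | ⟨e3, s3⟩ <;>
        rw [e1, e3] <;> omega
      refine sum_abs_one i a _ (fun mm h1 => by simp [h1]) ?_
      simpa using key
    · intro x
      rw [hform]
      by_cases h1 : x = i
      · subst h1
        simp [eps]
        try push_cast
        try ring
      · simp [eps, h1]
  · -- t = C, α = 2 • eps i
    subst ht
    have hPle : ∀ jj, 1 ≤ jj → jj ≤ k → p jj ≤ (i:ℕ) := by
      intro jj hj1 hjk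
      by_contra hcon
      push_neg at hcon
      have h0 := hvan jj hj1 hjk
      rw [hform, two_smul, map_add, phiL_eps] at h0
      simp only [if_pos hcon] at h0
      norm_num at h0
    have hgood : ∀ mm, (i:ℕ) ≤ mm → ∀ jj, 1 ≤ jj → jj ≤ k → mm + 1 ≠ p jj := by
      intro mm h1 jj hj1 hjk hcon
      have := hPle jj hj1 hjk
      omega
    set q : Fin n := ⟨n - 1, by omega⟩ with hq
    have hqval : (q:ℕ) = n - 1 := rfl
    have hiq : (i:ℕ) ≤ (q:ℕ) := by rw [hqval]; have := i.isLt; omega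
    have hb1 := hchain i q hiq (fun mm h1 _ => hgood mm h1)
    have hqgood : ∀ jj, 1 ≤ jj → jj ≤ k → (q:ℕ) + 1 ≠ p jj := by
      intro jj h1 h2 hcon
      have := hPle jj h1 h2
      rw [hqval] at hcon
      have := i.isLt
      omega
    have h2 := hlam2 q hqgood
    have hnotlt : ¬ ((q:ℕ) + 1 < n) := by rw [hqval]; omega
    rw [simpleRoot_C q hnotlt, pairing_C] at h2
    have hc := hmpair
    rw [hform, hμv, pairing_C] at hc
    simp only [Pi.add_apply] at hc
    have c1 : ((i:ℕ):ℝ) ≤ ((q:ℕ):ℝ) := by exact_mod_cast hiq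
    have hba : (a i : ℝ) ≤ (m:ℝ) := by linarith
    have hint : a i ≤ m := by exact_mod_cast hba
    refine finishX n r lam μ (rho n RSType.C) α a
      (fun x => if x = i then a i - 2 * m else a x) ha' hμa m hmpair ?_ ?_
    · have key : |a i - 2 * m| ≤ |a i| := by
        rcases abs_cases (a i - 2 * m) with ⟨e1, s1⟩ | ⟨e1, s1⟩ <;>
        rcases abs_cases (a i) with ⟨e3, s3⟩ | ⟨e3, s3⟩ <;>
        rw [e1, e3] <;> omega
      refine sum_abs_one i a _ (fun mm h1 => by simp [h1]) ?_
      simpa using key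
    · intro x
      rw [hform]
      by_cases h1 : x = i
      · subst h1
        simp [eps]
        try push_cast
        try ring
      · simp [eps, h1]
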